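/- arXiv:2311.06277 — 2 statements merged into one kernel-verified Lean document; each statement's English description precedes it below -/
import Mathlib

section
/- Let ω ∈ 𝓑'₀ have power series expansion ω(z) = c₁z + c₂z² + c₃z³ + ⋯ on 𝔻, and suppose 4/7 ≤ |c₁| ≤ 1. Then |c₃ − c₁c₂| ≤ (5/6)·|c₁|·(1 − |c₁|²). -/
/-!
Let `f = ω'`, a holomorphic map of the unit disk into the closed disk, with `f 0 = c₁`,
`f' 0 = 2 c₂`, `f'' 0 = 6 c₃`. If `f` touches the unit circle it is constant and `c₂ = c₃ = 0`.
Otherwise the Schur transform `(f z - f 0) / (z (1 - conj (f 0) f z))` maps the disk into the closed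
disk, and the Schwarz–Pick bound `|g' 0| ≤ 1 - |g 0|²`, applied to `f` and to its Schur transform,
gives `2|c₂| ≤ ρ` and `|3ρ c₃ + 4 c̄₁ c₂²| ≤ ρ² - 4|c₂|²`, with `ρ = 1 - |c₁|²`. The triangle
inequality then reduces the claim to a quadratic inequality in `|c₂|`, valid when `|c₁| ≥ 4/7`.
-/

open Complex ComplexConjugate Metric Set Filter Function Nat Topology

theorem iteratedDeriv_eq_factorial_mul_of_hasSum {𝕜 : Type*} [NontriviallyNormedField 𝕜]
    [CompleteSpace 𝕜] [CharZero 𝕜] {f : 𝕜 → 𝕜} {a : ℕ → 𝕜} {r : ℝ} (hr : 0 < r)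
    (h : ∀ z ∈ ball (0 : 𝕜) r, HasSum (fun n ↦ a n * z ^ n) (f z)) (n : ℕ) :
    iteratedDeriv n f 0 = n ! * a n := by
  obtain ⟨z, hz0, hzr⟩ := NormedField.exists_norm_lt 𝕜 hr
  set p := FormalMultilinearSeries.ofScalars 𝕜 a
  have hp : HasFPowerSeriesOnBall f p 0 ‖z‖₊ := by
    refine ⟨p.le_radius_of_tendsto (l := 0) ?_, by simpa using hz0, fun {y} hy ↦ ?_⟩
    · simpa [p, FormalMultilinearSeries.ofScalars_norm] using
        (h z (mem_ball_zero_iff.mpr hzr)).summable.tendsto_atTop_zero.norm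
    · have hy : ‖y‖ < r := by
        rw [Metric.mem_eball, edist_zero_right, enorm_lt_coe, ← NNReal.coe_lt_coe, coe_nnnorm,
          coe_nnnorm] at hy
        exact hy.trans hzr
      simpa [p, FormalMultilinearSeries.ofScalars_apply_eq, mul_comm] using
        h y (mem_ball_zero_iff.mpr hy)
  have := (FormalMultilinearSeries.ofScalars_series_eq_iff _ _ _).mp
    (hp.hasFPowerSeriesAt.eq_formalMultilinearSeries hp.analyticAt.hasFPowerSeriesAt)
  rw [congrFun this n, mul_div_cancel₀ _ (by exact_mod_cast n.factorial_ne_zero)]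

theorem AnalyticAt.hasDerivAt_dslope {𝕜 E : Type*} [NontriviallyNormedField 𝕜] [CharZero 𝕜]
    [NormedAddCommGroup E] [NormedSpace 𝕜 E] [CompleteSpace E] {f : 𝕜 → E} {x : 𝕜}
    (hf : AnalyticAt 𝕜 f x) : HasDerivAt (dslope f x) ((2 : 𝕜)⁻¹ • deriv (deriv f) x) x := by
  obtain ⟨p, r, hp⟩ := hf
  have h2 : (2 : 𝕜) • p.coeff 2 = deriv (deriv f) x := by
    have := hp.factorial_smul 1 2
    rw [FormalMultilinearSeries.apply_eq_pow_smul_coeff, ← iteratedDeriv_eq_iteratedFDeriv,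
      iteratedDeriv_succ, iteratedDeriv_one] at this
    simpa [ofNat_smul_eq_nsmul] using this
  have h := hp.hasFPowerSeriesAt.has_fpower_series_dslope_fslope
  rw [← h2, inv_smul_smul₀ two_ne_zero, ← FormalMultilinearSeries.coeff_fslope]
  exact h.hasDerivAt

theorem norm_sub_lt_norm_one_sub_conj_mul {a w : ℂ} (ha : ‖a‖ < 1) (hw : ‖w‖ < 1) :
    ‖w - a‖ < ‖1 - conj a * w‖ := by
  have hdiff : ‖1 - conj a * w‖ ^ 2 - ‖w - a‖ ^ 2 = (1 - ‖a‖ ^ 2) * (1 - ‖w‖ ^ 2) := by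
    simp only [Complex.sq_norm, normSq_apply, sub_re, sub_im, mul_re, mul_im, one_re, one_im,
      conj_re, conj_im]
    ring
  have hpos : 0 < (1 - ‖a‖ ^ 2) * (1 - ‖w‖ ^ 2) := by
    apply mul_pos <;> nlinarith [norm_nonneg a, norm_nonneg w]
  exact lt_of_pow_lt_pow_left₀ 2 (norm_nonneg _) (by linarith)

theorem one_sub_conj_mul_self (a : ℂ) : 1 - conj a * a = ((1 - ‖a‖ ^ 2 : ℝ) : ℂ) := by
  rw [conj_mul']
  push_cast
  rfl

theorem IsPreconnected.mapsTo_ball_or_eqOn_const {E F : Type*} [NormedAddCommGroup E]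
    [NormedSpace ℂ E] [NormedAddCommGroup F] [NormedSpace ℂ F] [StrictConvexSpace ℝ F]
    {f : E → F} {U : Set E} {r : ℝ} (hU : IsPreconnected U) (hUo : IsOpen U)
    (hf : DifferentiableOn ℂ f U) (hmaps : MapsTo f U (closedBall 0 r)) :
    MapsTo f U (ball 0 r) ∨ ∃ w, EqOn f (fun _ ↦ w) U := by
  refine or_iff_not_imp_left.mpr fun h ↦ ?_
  obtain ⟨z, hz, hzr⟩ := not_forall₂.mp h
  refine ⟨f z, eqOn_of_isPreconnected_of_isMaxOn_norm hU hUo hf hz fun y hy ↦ ?_⟩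
  have hy := hmaps hy
  simp only [mem_ball_zero_iff, mem_closedBall_zero_iff, not_lt] at hzr hy
  exact hy.trans hzr

/-- For `z ≠ 0` this is `(f z - f 0) / (z * (1 - conj (f 0) * f z))`, the first step of Schur's
algorithm. -/
noncomputable def schurTransform (f : ℂ → ℂ) (z : ℂ) : ℂ :=
  dslope f 0 z / (1 - conj (f 0) * f z)

theorem one_sub_conj_mul_ne_zero {f : ℂ → ℂ} (hmaps : MapsTo f (ball 0 1) (ball 0 1)) {z : ℂ}
    (hz : z ∈ ball 0 1) : 1 - conj (f 0) * f z ≠ 0 := by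
  intro h
  have := norm_sub_lt_norm_one_sub_conj_mul (mem_ball_zero_iff.mp (hmaps (mem_ball_self one_pos)))
    (mem_ball_zero_iff.mp (hmaps hz))
  rw [h, norm_zero] at this
  exact (norm_nonneg _).not_gt this

theorem differentiableOn_schurTransform {f : ℂ → ℂ} (hf : DifferentiableOn ℂ f (ball 0 1))
    (hmaps : MapsTo f (ball 0 1) (ball 0 1)) : DifferentiableOn ℂ (schurTransform f) (ball 0 1) :=
  ((differentiableOn_dslope (ball_mem_nhds 0 one_pos)).mpr hf).div
    ((differentiableOn_const 1).sub ((differentiableOn_const _).mul hf))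
    fun _ hz ↦ one_sub_conj_mul_ne_zero hmaps hz

theorem norm_schurTransform_le_one {f : ℂ → ℂ} (hf : DifferentiableOn ℂ f (ball 0 1))
    (hmaps : MapsTo f (ball 0 1) (ball 0 1)) {z : ℂ} (hz : z ∈ ball 0 1) :
    ‖schurTransform f z‖ ≤ 1 := by
  set g : ℂ → ℂ := fun w ↦ (f w - f 0) / (1 - conj (f 0) * f w)
  have hne := fun w (hw : w ∈ ball (0 : ℂ) 1) ↦ one_sub_conj_mul_ne_zero hmaps hw
  have hg : DifferentiableOn ℂ g (ball 0 1) :=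
    (hf.sub_const _).div ((differentiableOn_const 1).sub ((differentiableOn_const _).mul hf)) hne
  have hg0 : g 0 = 0 := by simp [g]
  have hgmaps : MapsTo g (ball 0 1) (closedBall (g 0) 1) := fun w hw ↦ by
    rw [hg0, mem_closedBall_zero_iff, norm_div, div_le_one₀ (norm_pos_iff.mpr (hne w hw))]
    exact (norm_sub_lt_norm_one_sub_conj_mul (mem_ball_zero_iff.mp (hmaps (mem_ball_self one_pos)))
      (mem_ball_zero_iff.mp (hmaps hw))).le
  have h0 : (0 : ℂ) ∈ ball 0 1 := mem_ball_self one_pos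
  have hg' : HasDerivAt g (deriv f 0 / (1 - conj (f 0) * f 0)) 0 := by
    have hf0 := (hf.differentiableAt (ball_mem_nhds 0 one_pos)).hasDerivAt
    refine ((hf0.sub_const _).div ((hf0.const_mul _).const_sub 1) (hne 0 h0)).congr_deriv ?_
    have hne0 := hne 0 h0
    field_simp
    ring
  -- `g` is the Möbius-normalised map with `g 0 = 0`, and Schwarz's lemma bounds its `dslope`.
  have key : schurTransform f z = dslope g 0 z := by
    rcases eq_or_ne z 0 with rfl | hz0
    · rw [dslope_same, hg'.deriv, schurTransform, dslope_same]
    · rw [schurTransform, dslope_of_ne _ hz0, dslope_of_ne _ hz0, slope_def_field,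
        slope_def_field, hg0]
      simp only [g, sub_zero, div_div, mul_comm]
  rw [key]
  simpa using norm_dslope_le_div_of_mapsTo_ball hg hgmaps hz

theorem norm_deriv_le_one_sub_sq {f : ℂ → ℂ} (hf : DifferentiableOn ℂ f (ball 0 1))
    (hmaps : MapsTo f (ball 0 1) (closedBall 0 1)) : ‖deriv f 0‖ ≤ 1 - ‖f 0‖ ^ 2 := by
  have h0 : (0 : ℂ) ∈ ball 0 1 := mem_ball_self one_pos
  rcases (convex_ball (0 : ℂ) 1).isPreconnected.mapsTo_ball_or_eqOn_const isOpen_ball hf hmaps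
    with hball | ⟨w, hw⟩
  · have h := norm_schurTransform_le_one hf hball h0
    have hρ : 0 < 1 - ‖f 0‖ ^ 2 := by
      nlinarith [mem_ball_zero_iff.mp (hball h0), norm_nonneg (f 0)]
    rwa [schurTransform, dslope_same, one_sub_conj_mul_self, norm_div, norm_real,
      Real.norm_of_nonneg hρ.le, div_le_one₀ hρ] at h
  · have hf0 : ‖f 0‖ ≤ 1 := mem_closedBall_zero_iff.mp (hmaps h0)
    rw [(eventuallyEq_of_mem (ball_mem_nhds 0 one_pos) hw).deriv_eq, deriv_const, norm_zero]
    nlinarith [norm_nonneg (f 0)]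

theorem hasDerivAt_schurTransform_zero {f : ℂ → ℂ} (hf : AnalyticAt ℂ f 0)
    (hne : 1 - conj (f 0) * f 0 ≠ 0) :
    HasDerivAt (schurTransform f) ((deriv (deriv f) 0 * (1 - conj (f 0) * f 0)
      + 2 * conj (f 0) * deriv f 0 ^ 2) / (2 * (1 - conj (f 0) * f 0) ^ 2)) 0 := by
  have hf' := hf.differentiableAt.hasDerivAt
  refine (hf.hasDerivAt_dslope.div ((hf'.const_mul _).const_sub 1) hne).congr_deriv ?_
  rw [dslope_same, smul_eq_mul]
  field_simp
  ring

theorem norm_second_order_schwarzPick_le {f : ℂ → ℂ} (hf : DifferentiableOn ℂ f (ball 0 1))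
    (hmaps : MapsTo f (ball 0 1) (ball 0 1)) :
    ‖((1 - ‖f 0‖ ^ 2 : ℝ) : ℂ) * deriv (deriv f) 0 + 2 * conj (f 0) * deriv f 0 ^ 2‖
      ≤ 2 * ((1 - ‖f 0‖ ^ 2) ^ 2 - ‖deriv f 0‖ ^ 2) := by
  have h0 : (0 : ℂ) ∈ ball 0 1 := mem_ball_self one_pos
  have hρ : 0 < 1 - ‖f 0‖ ^ 2 := by
    nlinarith [mem_ball_zero_iff.mp (hmaps h0), norm_nonneg (f 0)]
  have hder := hasDerivAt_schurTransform_zero (hf.analyticAt (ball_mem_nhds 0 one_pos))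
    (one_sub_conj_mul_ne_zero hmaps h0)
  have h := norm_deriv_le_one_sub_sq (differentiableOn_schurTransform hf hmaps)
    fun z hz ↦ mem_closedBall_zero_iff.mpr (norm_schurTransform_le_one hf hmaps hz)
  rw [hder.deriv, schurTransform, dslope_same, one_sub_conj_mul_self,
    mul_comm (deriv (deriv f) 0), norm_div, norm_div, norm_mul, norm_pow, norm_real,
    Real.norm_of_nonneg hρ.le, Complex.norm_two, div_le_iff₀ (by positivity)] at h
  field_simp at h
  linarith

theorem norm_sub_mul_le_of_schur_bounds {a b c : ℂ} (ha : 4 / 7 ≤ ‖a‖) (ha1 : ‖a‖ < 1)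
    (h₁ : ‖2 * b‖ ≤ 1 - ‖a‖ ^ 2)
    (h₂ : ‖((1 - ‖a‖ ^ 2 : ℝ) : ℂ) * (6 * c) + 2 * conj a * (2 * b) ^ 2‖
      ≤ 2 * ((1 - ‖a‖ ^ 2) ^ 2 - ‖2 * b‖ ^ 2)) :
    ‖c - a * b‖ ≤ 5 / 6 * ‖a‖ * (1 - ‖a‖ ^ 2) := by
  set ρ := 1 - ‖a‖ ^ 2
  have hρ : 0 < ρ := by nlinarith [norm_nonneg a]
  rw [norm_mul, Complex.norm_two] at h₁ h₂
  have htri : 6 * ρ * ‖c - a * b‖ ≤ 2 * (ρ ^ 2 - (2 * ‖b‖) ^ 2) + 8 * ‖a‖ * ‖b‖ ^ 2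
      + 6 * ρ * (‖a‖ * ‖b‖) := by
    have hid : ((6 * ρ : ℝ) : ℂ) * (c - a * b) = ((ρ : ℝ) : ℂ) * (6 * c) + 2 * conj a * (2 * b) ^ 2
        - 8 * conj a * b ^ 2 - ((6 * ρ : ℝ) : ℂ) * (a * b) := by
      push_cast
      ring
    calc 6 * ρ * ‖c - a * b‖ = ‖((6 * ρ : ℝ) : ℂ) * (c - a * b)‖ := by
          rw [norm_mul, norm_real, Real.norm_of_nonneg (by positivity)]
      _ ≤ ‖((ρ : ℝ) : ℂ) * (6 * c) + 2 * conj a * (2 * b) ^ 2‖ + ‖8 * conj a * b ^ 2‖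
          + ‖((6 * ρ : ℝ) : ℂ) * (a * b)‖ := by
          rw [hid]
          exact norm_sub_le_of_le (norm_sub_le _ _) le_rfl
      _ = ‖((ρ : ℝ) : ℂ) * (6 * c) + 2 * conj a * (2 * b) ^ 2‖ + 8 * ‖a‖ * ‖b‖ ^ 2
          + 6 * ρ * (‖a‖ * ‖b‖) := by
          simp [abs_of_pos hρ]
      _ ≤ _ := by linarith
  have hk := norm_nonneg b
  -- With `k = ‖b‖`, the gap is `(ρ - 2k) * ((5‖a‖/2 - 1) ρ - 2 (1 - ‖a‖) k)`; since `2k ≤ ρ`, the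
  -- second factor is at least `(7‖a‖/2 - 2) ρ`, which is where `4/7 ≤ ‖a‖` enters.
  nlinarith [mul_nonneg (sub_nonneg.mpr h₁)
      (mul_nonneg (sub_nonneg.mpr ha1.le) (sub_nonneg.mpr h₁)),
    mul_nonneg (sub_nonneg.mpr h₁) (mul_nonneg (by linarith : (0 : ℝ) ≤ 7 * ‖a‖ / 2 - 2) hρ.le)]

theorem stmt_6_general (ω : ℂ → ℂ) (c : ℕ → ℂ)
    (hd : DifferentiableOn ℂ ω (ball 0 1))
    (hb : ∀ z ∈ ball (0:ℂ) 1, ‖deriv ω z‖ ≤ 1)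
    (hc : ∀ z ∈ ball (0:ℂ) 1, HasSum (fun n : ℕ => c (n + 1) * z ^ (n + 1)) (ω z))
    (h1 : 4/7 ≤ ‖c 1‖)
    (h2 : ‖c 1‖ ≤ 1) :
    ‖c 3 - c 1 * c 2‖ ≤ (5/6) * ‖c 1‖ * (1 - ‖c 1‖^2) := by
  have hcoeff := iteratedDeriv_eq_factorial_mul_of_hasSum one_pos fun z hz ↦ by
    simpa using HasSum.zero_add (f := fun n ↦ update c 0 0 n * z ^ n) (by simpa using hc z hz)
  set f := deriv ω
  have e1 : f 0 = c 1 := by simpa using hcoeff 1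
  have e2 : deriv f 0 = 2 * c 2 := by simpa [iteratedDeriv_succ'] using hcoeff 2
  have e3 : deriv (deriv f) 0 = 6 * c 3 := by
    simpa [iteratedDeriv_succ', Nat.factorial] using hcoeff 3
  have h0 : (0 : ℂ) ∈ ball 0 1 := mem_ball_self one_pos
  have hf : DifferentiableOn ℂ f (ball 0 1) := hd.deriv isOpen_ball
  have hmaps : MapsTo f (ball 0 1) (closedBall 0 1) := fun z hz ↦
    mem_closedBall_zero_iff.mpr (hb z hz)
  rcases (convex_ball (0 : ℂ) 1).isPreconnected.mapsTo_ball_or_eqOn_const isOpen_ball hf hmaps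
    with hball | ⟨w, hw⟩
  · have hfirst := norm_deriv_le_one_sub_sq hf hmaps
    have hsecond := norm_second_order_schwarzPick_le hf hball
    have hc1 : ‖c 1‖ < 1 := e1 ▸ mem_ball_zero_iff.mp (hball h0)
    rw [e1, e2] at hfirst
    rw [e1, e2, e3] at hsecond
    exact norm_sub_mul_le_of_schur_bounds h1 hc1 hfirst hsecond
  · have hconst : f =ᶠ[𝓝 0] fun _ ↦ w := eventuallyEq_of_mem (ball_mem_nhds 0 one_pos) hw
    have hc2 : c 2 = 0 := by simpa [e2] using hconst.deriv_eq
    have hc3 : c 3 = 0 := by simpa [e3] using hconst.deriv.deriv_eq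
    rw [hc2, hc3, mul_zero, sub_zero, norm_zero]
    have : 0 ≤ 1 - ‖c 1‖ ^ 2 := by nlinarith [norm_nonneg (c 1)]
    positivity

theorem stmt_6 (ω : ℂ → ℂ) (c : ℕ → ℂ)
    (hd : DifferentiableOn ℂ ω (ball 0 1))
    (h0 : ω 0 = 0)
    (hb : ∀ z ∈ ball (0:ℂ) 1, ‖deriv ω z‖ ≤ 1)
    (hc : ∀ z ∈ ball (0:ℂ) 1, HasSum (fun n : ℕ => c (n + 1) * z ^ (n + 1)) (ω z))
    (h1 : 4/7 ≤ ‖c 1‖)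
    (h2 : ‖c 1‖ ≤ 1) :
    ‖c 3 - c 1 * c 2‖ ≤ (5/6) * ‖c 1‖ * (1 - ‖c 1‖^2) :=
  stmt_6_general ω c hd hb hc h1 h2
end

section
/- Let ω ∈ 𝓑'₀ have power series expansion ω(z) = c₁z + c₂z² + c₃z³ + ⋯ on 𝔻, let μ ∈ ℂ, and suppose 0 ≤ |c₁| ≤ 1/(1 + (3/4)|μ|). Then |c₃ − μc₁c₂| ≤ (1/48)·(1 + |c₁|)·(9|μ|²|c₁|² − 16|c₁| + 16). -/
/-!
Put `f = ω'`, a holomorphic map of the unit disk into the closed unit disk, and `a = f 0 = c₁`.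
Composing `f` with the disk automorphism `w ↦ (w - a) / (1 - ā w)` and dividing by `z` (Schwarz's
lemma) gives another such map `g` with `f = (a + z g) / (1 + ā z g)` (if `|a| = 1`, then `f` is
constant and `g = 0`). Differentiating this relation at `0` yields `2 c₂ = (1 - |a|²) g(0)` and
`6 c₃ = (1 - |a|²) (2 g'(0) - 2 ā g(0)²)`; applied to `g` itself, the first identity gives
`|g'(0)| ≤ 1 - |g(0)|²`. The triangle inequality then reduces the estimate to a real inequality in
`|a|`, `|g(0)|` and `|μ|` whose defect is a perfect square.
-/

open Complex Metric Set Filter Topology FormalMultilinearSeries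
open scoped Nat ComplexConjugate

theorem hasFPowerSeriesOnBall_ofScalars_of_hasSum {𝕜 : Type*} [RCLike 𝕜] {f : 𝕜 → 𝕜}
    {a : ℕ → 𝕜} {r : ℝ} (hr : 0 < r)
    (h : ∀ z ∈ ball (0 : 𝕜) r, HasSum (fun n => a n * z ^ n) (f z)) :
    HasFPowerSeriesOnBall f (ofScalars 𝕜 a) 0 (ENNReal.ofReal r) := by
  refine ⟨?_, by simpa using hr, fun {y} hy => ?_⟩
  · refine ENNReal.le_of_forall_nnreal_lt fun s hs => ?_
    have hsr : ((s : ℝ) : 𝕜) ∈ ball (0 : 𝕜) r := by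
      simpa [RCLike.norm_ofReal] using (ENNReal.lt_ofReal_iff_toReal_lt ENNReal.coe_ne_top).mp hs
    refine (ofScalars 𝕜 a).le_radius_of_tendsto (l := 0) ?_
    simpa [ofScalars_norm, RCLike.norm_ofReal] using (h _ hsr).summable.tendsto_atTop_zero.norm
  · rw [Metric.eball_ofReal] at hy
    simpa [ofScalars_apply_eq, mul_comm] using h y hy

theorem HasFPowerSeriesAt.iteratedDeriv_eq_factorial_mul {𝕜 : Type*} [NontriviallyNormedField 𝕜]
    [CompleteSpace 𝕜] [CharZero 𝕜] {f : 𝕜 → 𝕜} {a : ℕ → 𝕜} {x : 𝕜}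
    (h : HasFPowerSeriesAt f (ofScalars 𝕜 a) x) (n : ℕ) :
    iteratedDeriv n f x = n ! * a n := by
  rw [← congrFun (ofScalars_series_injective 𝕜 𝕜
    (h.analyticAt.hasFPowerSeriesAt.eq_formalMultilinearSeries h)) n,
    mul_div_cancel₀ _ (Nat.cast_ne_zero.mpr n.factorial_ne_zero)]

theorem deriv_eq_of_eventually_mul_one_add_eq {𝕜 : Type*} [NontriviallyNormedField 𝕜]
    {f u : 𝕜 → 𝕜} {a b : 𝕜} (hf : ContDiffAt 𝕜 2 f 0) (hu : ContDiffAt 𝕜 2 u 0)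
    (hu0 : u 0 = 0) (h : ∀ᶠ z in 𝓝 0, f z * (1 + b * u z) = a + u z) :
    deriv f 0 = (1 - b * a) * deriv u 0 ∧
      iteratedDeriv 2 f 0 = (1 - b * a) * (iteratedDeriv 2 u 0 - 2 * b * deriv u 0 ^ 2) := by
  have hfa : f 0 = a := by simpa [hu0] using h.self_of_nhds
  have hv : ContDiffAt 𝕜 2 (fun z => 1 + b * u z) 0 :=
    contDiffAt_const.add (contDiffAt_const.mul hu)
  have h1 := (EventuallyEq.iteratedDeriv h 1).self_of_nhds
  have h2 := (EventuallyEq.iteratedDeriv h 2).self_of_nhds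
  rw [iteratedDeriv_fun_mul (hf.of_le one_le_two) (hv.of_le one_le_two)] at h1
  rw [iteratedDeriv_fun_mul hf hv] at h2
  simp only [Nat.reduceAdd, Finset.sum_range_succ, Finset.range_one, Finset.sum_singleton,
    Nat.choose_zero_right, Nat.cast_one, iteratedDeriv_zero, hfa, one_mul, tsub_zero,
    Order.lt_one_iff, iteratedDeriv_const_add, iteratedDeriv_const_mul_field, iteratedDeriv_one,
    Nat.choose_self, tsub_self, hu0, mul_zero, add_zero, mul_one, Order.lt_two_iff, zero_le,
    Nat.choose_succ_self_right, Nat.cast_ofNat, Nat.add_one_sub_one] at h1 h2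
  have hd1 : deriv f 0 = (1 - b * a) * deriv u 0 := by linear_combination h1
  exact ⟨hd1, by linear_combination h2 - 2 * b * deriv u 0 * hd1⟩

theorem norm_sub_le_norm_one_sub_conj_mul {a w : ℂ} (ha : ‖a‖ ≤ 1) (hw : ‖w‖ ≤ 1) :
    ‖w - a‖ ≤ ‖1 - conj a * w‖ := by
  have hgap : normSq (1 - conj a * w) - normSq (w - a) = (1 - normSq a) * (1 - normSq w) := by
    simp only [normSq_apply, sub_re, sub_im, mul_re, mul_im, one_re, one_im, conj_re, conj_im]
    ring
  have ha' : normSq a ≤ 1 := normSq_eq_norm_sq a ▸ pow_le_one₀ (norm_nonneg a) ha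
  have hw' : normSq w ≤ 1 := normSq_eq_norm_sq w ▸ pow_le_one₀ (norm_nonneg w) hw
  rw [← sq_le_sq₀ (norm_nonneg _) (norm_nonneg _), ← normSq_eq_norm_sq, ← normSq_eq_norm_sq]
  nlinarith [mul_nonneg (sub_nonneg.2 ha') (sub_nonneg.2 hw')]

section UnitDisk

variable {f : ℂ → ℂ}

theorem exists_mul_one_add_conj_mul_eq_of_norm_lt_one (hf : DifferentiableOn ℂ f (ball 0 1))
    (hb : ∀ z ∈ ball (0 : ℂ) 1, ‖f z‖ ≤ 1) (h0 : ‖f 0‖ < 1) :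
    ∃ g : ℂ → ℂ, DifferentiableOn ℂ g (ball 0 1) ∧ (∀ z ∈ ball (0 : ℂ) 1, ‖g z‖ ≤ 1) ∧
      ∀ z ∈ ball (0 : ℂ) 1, f z * (1 + conj (f 0) * (z * g z)) = f 0 + z * g z := by
  set a := f 0
  have hden : ∀ z ∈ ball (0 : ℂ) 1, 1 - conj a * f z ≠ 0 := by
    intro z hz heq
    have hlt : ‖conj a * f z‖ < 1 := by
      rw [norm_mul, norm_conj]
      exact mul_lt_one_of_nonneg_of_lt_one_left (norm_nonneg a) h0 (hb z hz)
    rw [← sub_eq_zero.mp heq, norm_one] at hlt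
    exact hlt.false
  set h : ℂ → ℂ := fun z => (f z - a) / (1 - conj a * f z)
  have hh : DifferentiableOn ℂ h (ball 0 1) :=
    (hf.sub_const a).div ((differentiableOn_const 1).sub (hf.const_mul _)) hden
  have hh0 : h 0 = 0 := by simp [h, a]
  have hhb : MapsTo h (ball 0 1) (closedBall (h 0) 1) := by
    intro z hz
    rw [hh0, mem_closedBall_zero_iff, norm_div]
    exact div_le_one_of_le₀ (norm_sub_le_norm_one_sub_conj_mul h0.le (hb z hz)) (norm_nonneg _)
  refine ⟨dslope h 0,
    (differentiableOn_dslope (isOpen_ball.mem_nhds (mem_ball_self one_pos))).mpr hh,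
    fun z hz => by simpa using norm_dslope_le_div_of_mapsTo_ball hh hhb hz, fun z hz => ?_⟩
  have hzg : z * dslope h 0 z = h z := by simpa [hh0] using sub_smul_dslope h 0 z
  rw [hzg]
  linear_combination -(div_mul_cancel₀ (f z - a) (hden z hz))

theorem exists_mul_one_add_conj_mul_eq (hf : DifferentiableOn ℂ f (ball 0 1))
    (hb : ∀ z ∈ ball (0 : ℂ) 1, ‖f z‖ ≤ 1) :
    ∃ g : ℂ → ℂ, DifferentiableOn ℂ g (ball 0 1) ∧ (∀ z ∈ ball (0 : ℂ) 1, ‖g z‖ ≤ 1) ∧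
      ∀ z ∈ ball (0 : ℂ) 1, f z * (1 + conj (f 0) * (z * g z)) = f 0 + z * g z := by
  rcases (hb 0 (mem_ball_self one_pos)).lt_or_eq with h0 | h0
  · exact exists_mul_one_add_conj_mul_eq_of_norm_lt_one hf hb h0
  have hconst : EqOn f (fun _ => f 0) (ball 0 1) :=
    eqOn_of_isPreconnected_of_isMaxOn_norm (convex_ball 0 1).isPreconnected isOpen_ball hf
      (mem_ball_self one_pos) fun z hz => (hb z hz).trans_eq h0.symm
  exact ⟨0, differentiableOn_const 0, by simp, fun z hz => by simp [hconst hz]⟩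

theorem exists_schur_transform (hf : DifferentiableOn ℂ f (ball 0 1))
    (hb : ∀ z ∈ ball (0 : ℂ) 1, ‖f z‖ ≤ 1) :
    ∃ g : ℂ → ℂ, DifferentiableOn ℂ g (ball 0 1) ∧ (∀ z ∈ ball (0 : ℂ) 1, ‖g z‖ ≤ 1) ∧
      deriv f 0 = (1 - ‖f 0‖ ^ 2 : ℝ) * g 0 ∧
      iteratedDeriv 2 f 0 = (1 - ‖f 0‖ ^ 2 : ℝ) * (2 * deriv g 0 - 2 * conj (f 0) * g 0 ^ 2) := by
  obtain ⟨g, hgd, hgb, hfg⟩ := exists_mul_one_add_conj_mul_eq hf hb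
  have h0 : ball (0 : ℂ) 1 ∈ 𝓝 0 := isOpen_ball.mem_nhds (mem_ball_self one_pos)
  have hga : ContDiffAt ℂ 2 g 0 := (hgd.analyticAt h0).contDiffAt
  have hu : ContDiffAt ℂ 2 (fun z => z * g z) 0 := contDiffAt_id.mul hga
  have hu1 : deriv (fun z => z * g z) 0 = g 0 := by
    rw [← iteratedDeriv_one,
      iteratedDeriv_fun_mul (f := fun z => z) contDiffAt_fun_id (hga.of_le one_le_two)]
    simp [iteratedDeriv_fun_id_zero]
  have hu2 : iteratedDeriv 2 (fun z => z * g z) 0 = 2 * deriv g 0 := by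
    rw [iteratedDeriv_fun_mul (f := fun z => z) contDiffAt_fun_id hga]
    simp [iteratedDeriv_fun_id_zero]
  obtain ⟨hd1, hd2⟩ := deriv_eq_of_eventually_mul_one_add_eq (hf.analyticAt h0).contDiffAt hu
    (by simp) (eventually_of_mem h0 hfg)
  rw [conj_mul', hu1] at hd1
  rw [conj_mul', hu1, hu2] at hd2
  exact ⟨g, hgd, hgb, by push_cast; exact hd1, by push_cast; linear_combination hd2⟩

theorem norm_deriv_le_one_sub_norm_sq (hf : DifferentiableOn ℂ f (ball 0 1))
    (hb : ∀ z ∈ ball (0 : ℂ) 1, ‖f z‖ ≤ 1) :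
    ‖deriv f 0‖ ≤ 1 - ‖f 0‖ ^ 2 := by
  obtain ⟨g, -, hgb, hd1, -⟩ := exists_schur_transform hf hb
  have hf0 : ‖f 0‖ ≤ 1 := hb 0 (mem_ball_self one_pos)
  have hpos : 0 ≤ 1 - ‖f 0‖ ^ 2 := by nlinarith [norm_nonneg (f 0)]
  rw [hd1, norm_mul, norm_real, Real.norm_of_nonneg hpos]
  exact mul_le_of_le_one_right hpos (hgb 0 (mem_ball_self one_pos))

end UnitDisk

-- The difference of the two sides is
-- `(1 + A) (3 M A - 4 t (1 - A))² / 48 + (1 - A²) (1 - t² - G) / 3`.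
theorem one_sub_sq_mul_le {A t G M : ℝ} (hA0 : 0 ≤ A) (hA1 : A ≤ 1) (hG : G ≤ 1 - t ^ 2) :
    (1 - A ^ 2) * (G / 3 + A * t ^ 2 / 3 + M * A * t / 2) ≤
      1 / 48 * (1 + A) * (9 * M ^ 2 * A ^ 2 - 16 * A + 16) := by
  have hA : 0 ≤ 1 - A ^ 2 := by nlinarith
  nlinarith [mul_le_mul_of_nonneg_left hG hA,
    mul_nonneg (by linarith : 0 ≤ 1 + A) (sq_nonneg (3 * M * A - 4 * t * (1 - A)))]

theorem norm_one_sub_sq_mul_le {a g₀ g₁ μ : ℂ} (ha : ‖a‖ ≤ 1) (hg : ‖g₁‖ ≤ 1 - ‖g₀‖ ^ 2) :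
    ‖((1 - ‖a‖ ^ 2 : ℝ) : ℂ) * (g₁ / 3 - conj a * g₀ ^ 2 / 3 - μ * a * g₀ / 2)‖ ≤
      1 / 48 * (1 + ‖a‖) * (9 * ‖μ‖ ^ 2 * ‖a‖ ^ 2 - 16 * ‖a‖ + 16) := by
  have hpos : 0 ≤ 1 - ‖a‖ ^ 2 := by nlinarith [norm_nonneg a]
  have htri : ‖g₁ / 3 - conj a * g₀ ^ 2 / 3 - μ * a * g₀ / 2‖ ≤
      ‖g₁‖ / 3 + ‖a‖ * ‖g₀‖ ^ 2 / 3 + ‖μ‖ * ‖a‖ * ‖g₀‖ / 2 :=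
    (norm_sub_le_of_le (norm_sub_le _ _) le_rfl).trans_eq (by simp)
  rw [norm_mul, norm_real, Real.norm_of_nonneg hpos]
  exact (mul_le_mul_of_nonneg_left htri hpos).trans (one_sub_sq_mul_le (norm_nonneg a) ha hg)

theorem stmt_9_general (ω : ℂ → ℂ) (c : ℕ → ℂ) (μ : ℂ)
    (hb : ∀ z ∈ ball (0:ℂ) 1, ‖deriv ω z‖ ≤ 1)
    (hc : ∀ z ∈ ball (0:ℂ) 1, HasSum (fun n : ℕ => c (n + 1) * z ^ (n + 1)) (ω z)) :
    ‖c 3 - μ * c 1 * c 2‖ ≤ (1/48) * (1 + ‖c 1‖) * (9 * ‖μ‖^2 * ‖c 1‖^2 - 16 * ‖c 1‖ + 16) := by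
  have hω : HasFPowerSeriesOnBall ω (ofScalars ℂ (Function.update c 0 0)) 0 (ENNReal.ofReal 1) :=
    hasFPowerSeriesOnBall_ofScalars_of_hasSum one_pos fun z hz =>
      (hasSum_nat_add_iff' 1).mp (by simpa using hc z hz)
  have hcoeff (n : ℕ) (hn : n ≠ 0) : iteratedDeriv n ω 0 = n ! * c n := by
    simpa [hn] using hω.hasFPowerSeriesAt.iteratedDeriv_eq_factorial_mul n
  have hd : DifferentiableOn ℂ (deriv ω) (ball 0 1) := by
    simpa only [Metric.eball_ofReal] using hω.differentiableOn.deriv Metric.isOpen_eball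
  obtain ⟨g, hgd, hgb, hd1, hd2⟩ := exists_schur_transform hd hb
  have hc1 : c 1 = deriv ω 0 := by simpa using (hcoeff 1 one_ne_zero).symm
  have hc2 : 2 * c 2 = deriv (deriv ω) 0 := by
    simpa [iteratedDeriv_succ'] using (hcoeff 2 two_ne_zero).symm
  have hc3 : 6 * c 3 = iteratedDeriv 2 (deriv ω) 0 := by
    simpa [iteratedDeriv_succ', Nat.factorial] using (hcoeff 3 three_ne_zero).symm
  rw [hd1] at hc2
  rw [hd2] at hc3
  rw [hc1, show c 3 - μ * deriv ω 0 * c 2 = ((1 - ‖deriv ω 0‖ ^ 2 : ℝ) : ℂ) *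
      (deriv g 0 / 3 - conj (deriv ω 0) * g 0 ^ 2 / 3 - μ * deriv ω 0 * g 0 / 2) by
    linear_combination hc3 / 6 - μ * deriv ω 0 * hc2 / 2]
  exact norm_one_sub_sq_mul_le (hb 0 (mem_ball_self one_pos))
    (norm_deriv_le_one_sub_norm_sq hgd hgb)

theorem stmt_9 (ω : ℂ → ℂ) (c : ℕ → ℂ) (μ : ℂ)
    (hd : DifferentiableOn ℂ ω (ball 0 1))
    (h0 : ω 0 = 0)
    (hb : ∀ z ∈ ball (0:ℂ) 1, ‖deriv ω z‖ ≤ 1)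
    (hc : ∀ z ∈ ball (0:ℂ) 1, HasSum (fun n : ℕ => c (n + 1) * z ^ (n + 1)) (ω z))
    (h1 : ‖c 1‖ ≤ 1 / (1 + (3/4) * ‖μ‖)) :
    ‖c 3 - μ * c 1 * c 2‖ ≤ (1/48) * (1 + ‖c 1‖) * (9 * ‖μ‖^2 * ‖c 1‖^2 - 16 * ‖c 1‖ + 16) :=
  stmt_9_general ω c μ hb hc
end
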